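/- arXiv:2203.08523 — 4 statements merged into one kernel-verified Lean document; each statement's English description precedes it below -/
import Mathlib

section
/- Suppose (A_N) satisfies sup_N ‖A_N‖_∞ < ∞ and there is a measurable a ∈ L^∞([0,1]×ℝ) with lim_{N→∞} A_N([t,x]_N) = a(t,x) for almost every (t,x). Then for every continuous compactly supported function g on [0,1]×ℝ, lim_{N→∞} N^{−3/2} E[(S^N_1(g))²] = ∫_{[0,1]×ℝ} g(t,x)² a(t,x)² dt dx. -/
open MeasureTheory ProbabilityTheory Filter Topology

noncomputable section

open Classical in
/-- Real-valued indicator of a proposition. -/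
def indi (p : Prop) : ℝ := if p then 1 else 0

/-- The previous value `t (j-1)`, with the convention `t 0 = 0` (zero for the first index). -/
def prev {α : Type*} [Zero α] {n : ℕ} (t : Fin n → α) (j : Fin n) : α :=
  if _h : j.1 = 0 then 0 else t ⟨j.1 - 1, Nat.lt_of_le_of_lt (Nat.sub_le _ _) j.2⟩

/-- `S` is a simple symmetric random walk on `ℤ` under `P`: `S n = ξ 1 + ⋯ + ξ n` for an
i.i.d. family `ξ` of Rademacher (±1, probability 1/2 each) steps. -/
def IsSSRW {Ω : Type*} [MeasurableSpace Ω] (P : Measure Ω) (S : ℕ → Ω → ℤ) : Prop :=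
  ∃ ξ : ℕ → Ω → ℤ,
    iIndepFun ξ P ∧
    (∀ i, Measurable (ξ i)) ∧
    (∀ i, P {a | ξ i a = 1} = 1/2 ∧ P {a | ξ i a = -1} = 1/2) ∧
    (∀ n a, S n a = ∑ i ∈ Finset.Icc 1 n, ξ i a)

/-- `ω` is an i.i.d. field of Rademacher random variables indexed by `ℕ × ℤ` under `P`. -/
def IsRademacher {Ω : Type*} [MeasurableSpace Ω] (P : Measure Ω) (ω : ℕ × ℤ → Ω → ℝ) : Prop :=
  iIndepFun ω P ∧
  (∀ p, Measurable (ω p)) ∧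
  (∀ p, P {a | ω p a = 1} = 1/2 ∧ P {a | ω p a = -1} = 1/2)

/-- The partition function `𝔷_N(A) = E[∏_{n=1}^N (1 + A(n,S_n) ω(n,S_n)) | ω]`,
the conditional expectation being taken with respect to the σ-algebra generated by `ω`. -/
def partitionFn {Ω : Type*} [MeasurableSpace Ω] (P : Measure Ω)
    (S : ℕ → Ω → ℤ) (ω : ℕ × ℤ → Ω → ℝ) (N : ℕ) (A : ℕ × ℤ → ℝ) : Ω → ℝ :=
  P[fun a => ∏ n ∈ Finset.Icc 1 N, (1 + A (n, S n a) * ω (n, S n a) a) |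
    MeasurableSpace.comap (fun a => fun p => ω p a) inferInstance]

/-- The time coordinate `i` of `[t,x]_N`: the unique `i` with `t ∈ ((i-1)/N, i/N]`. -/
def gridTime (N : ℕ) (t : ℝ) : ℕ := ⌈(N : ℝ) * t⌉₊

/-- The space coordinate `z` of `[t,x]_N`: the unique `z` of the same parity as the time
coordinate `i` with `x ∈ ((z-1)/√N, (z+1)/√N]`. -/
def gridSpace (N : ℕ) (t x : ℝ) : ℤ :=
  (gridTime N t : ℤ) + 2 * ⌈(Real.sqrt N * x - 1 - ((gridTime N t : ℤ) : ℝ)) / 2⌉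

/-- The standard Gaussian heat kernel `ϱ(t,x) = e^{-x²/(2t)} / √(2πt)`. -/
def heatK (t x : ℝ) : ℝ := Real.exp (-(x ^ 2) / (2 * t)) / Real.sqrt (2 * Real.pi * t)

/-- `ϱ_n(t,x) = ∏_j ϱ(t_j - t_{j-1}, x_j - x_{j-1})` on the simplex `Δ_n × ℝ^n`,
zero outside. -/
def rhoN (n : ℕ) (q : (Fin n → ℝ) × (Fin n → ℝ)) : ℝ :=
  indi ((∀ j, 0 < q.1 j ∧ q.1 j ≤ 1) ∧ StrictMono q.1) *
    ∏ j, heatK (q.1 j - prev q.1 j) (q.2 j - prev q.2 j)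

/-- The average of `g` over the rectangle `((i-1)/N, i/N] × ((z-1)/√N, (z+1)/√N]`
(coordinatewise), whose Lebesgue measure is `2^n N^{-3n/2}`; this is the value
`ḡ_N(i/N, z/√N)`. -/
def rectAvg (n : ℕ) (g : (Fin n → ℝ) × (Fin n → ℝ) → ℝ) (N : ℕ)
    (i : Fin n → ℕ) (z : Fin n → ℤ) : ℝ :=
  ((N : ℝ) ^ ((3 * (n : ℝ)) / 2) / 2 ^ n) *
    ∫ q in (Set.univ.pi fun j => Set.Ioc (((i j : ℝ) - 1) / N) ((i j : ℝ) / N)) ×ˢ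
        (Set.univ.pi fun j =>
          Set.Ioc (((z j : ℝ) - 1) / Real.sqrt N) (((z j : ℝ) + 1) / Real.sqrt N)),
      g q

/-- The weighted U-statistic
`S^N_n(g) = 2^{n/2} ∑_{i ∈ E^N_n} ∑_{z ∈ ℤ^n, i ↔ z} ḡ_N(i/N, z/√N) A(i,z) ω(i,z)`. -/
def Ustat {Ω : Type*} (ω : ℕ × ℤ → Ω → ℝ) (A : ℕ × ℤ → ℝ) (n N : ℕ)
    (g : (Fin n → ℝ) × (Fin n → ℝ) → ℝ) (a : Ω) : ℝ :=
  2 ^ ((n : ℝ) / 2) *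
    ∑' i : Fin n → ℕ, ∑' z : Fin n → ℤ,
      indi ((∀ j, 1 ≤ i j ∧ i j ≤ N) ∧ Function.Injective i ∧
            ∀ j, (i j : ℤ) % 2 = z j % 2) *
        (rectAvg n g N i z * (∏ j, A (i j, z j)) * ∏ j, ω (i j, z j) a)

/-- Order-1 rectangle average: the value `ḡ_N(i/N, z/√N)`. -/
def rectAvg1 (g : ℝ × ℝ → ℝ) (N : ℕ) (i : ℕ) (z : ℤ) : ℝ :=
  ((N : ℝ) ^ ((3 : ℝ) / 2) / 2) *
    ∫ q in Set.Ioc (((i : ℝ) - 1) / N) ((i : ℝ) / N) ×ˢ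
        Set.Ioc (((z : ℝ) - 1) / Real.sqrt N) (((z : ℝ) + 1) / Real.sqrt N),
      g q

/-- The order-1 U-statistic `S^N_1(g) = √2 ∑_{i=1}^N ∑_{z ≡ i (2)} ḡ_N(i/N,z/√N) A(i,z) ω(i,z)`. -/
def Ustat1 {Ω : Type*} (ω : ℕ × ℤ → Ω → ℝ) (A : ℕ × ℤ → ℝ) (N : ℕ)
    (g : ℝ × ℝ → ℝ) (a : Ω) : ℝ :=
  Real.sqrt 2 * ∑ i ∈ Finset.Icc 1 N, ∑' z : ℤ,
    indi ((i : ℤ) % 2 = z % 2) * (rectAvg1 g N i z * A (i, z) * ω (i, z) a)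

/-- `p^N_n(t,x) = 2^{-n} p_n([t,x]_N) 1{⌈Nt⌉ ∈ D^N_n}`, built from the one-step
transition probabilities `p` of the walk. -/
def pNn (p : ℕ → ℤ → ℝ) (n N : ℕ) (q : (Fin n → ℝ) × (Fin n → ℝ)) : ℝ :=
  (2 : ℝ)⁻¹ ^ n *
    indi ((∀ j, 1 ≤ gridTime N (q.1 j) ∧ gridTime N (q.1 j) ≤ N) ∧
          StrictMono fun j => gridTime N (q.1 j)) *
    ∏ j, p (gridTime N (q.1 j) - prev (fun j' => gridTime N (q.1 j')) j)
        (gridSpace N (q.1 j) (q.2 j) - prev (fun j' => gridSpace N (q.1 j') (q.2 j')) j)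

end

/-!
Orthogonality of the Rademacher field turns `E[(S^N_1 g)²]` into `2 ∑_{(i,z)} (ḡ_N A_N)(i,z)²`,
and since every cell of the grid has area `2 N^{-3/2}`, `N^{-3/2}` times this sum is exactly the
integral over `(0,1] × ℝ` of the step function `(t,x) ↦ (ḡ_N A_N)([t,x]_N)²`. By the mean value
theorem for integrals, `ḡ_N([t,x]_N)` is a value of `g` on a cell of diameter `O(N^{-1/2})`
containing `(t,x)`; hence these step functions are uniformly bounded, vanish outside a fixed
bounded strip and converge almost everywhere to `g² a²`, and dominated convergence concludes.
-/

open Set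

namespace IsRademacher

variable {Ω : Type*} [MeasurableSpace Ω] {P : Measure Ω} [IsProbabilityMeasure P]
  {ω : ℕ × ℤ → Ω → ℝ}

theorem ae_eq_one_or_eq_neg_one (hω : IsRademacher P ω) (p : ℕ × ℤ) :
    ∀ᵐ a ∂P, ω p a = 1 ∨ ω p a = -1 := by
  have hpos : MeasurableSet {a | ω p a = 1} := hω.2.1 p (measurableSet_singleton 1)
  have hneg : MeasurableSet {a | ω p a = -1} := hω.2.1 p (measurableSet_singleton (-1))
  have hdisj : Disjoint {a | ω p a = 1} {a | ω p a = -1} :=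
    disjoint_left.2 fun a (h1 : ω p a = 1) (h2 : ω p a = -1) => by norm_num [h1] at h2
  refine mem_ae_iff.2 ((prob_compl_eq_zero_iff (hpos.union hneg)).2 ?_)
  rw [measure_union hdisj hneg, (hω.2.2 p).1, (hω.2.2 p).2, ENNReal.add_halves]

theorem integral_eq_zero (hω : IsRademacher P ω) (p : ℕ × ℤ) : ∫ a, ω p a ∂P = 0 := by
  have hpos : MeasurableSet {a | ω p a = 1} := hω.2.1 p (measurableSet_singleton 1)
  have hneg : MeasurableSet {a | ω p a = -1} := hω.2.1 p (measurableSet_singleton (-1))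
  have hsplit : ω p =ᵐ[P]
      fun a => {a | ω p a = 1}.indicator 1 a - {a | ω p a = -1}.indicator 1 a := by
    filter_upwards [hω.ae_eq_one_or_eq_neg_one p] with a ha
    rcases ha with ha | ha <;> norm_num [indicator, ha]
  rw [integral_congr_ae hsplit, integral_sub ((integrable_const 1).indicator hpos)
    ((integrable_const 1).indicator hneg), integral_indicator_one hpos, integral_indicator_one hneg,
    measureReal_def, measureReal_def, (hω.2.2 p).1, (hω.2.2 p).2, sub_self]

theorem integrable_mul (hω : IsRademacher P ω) (p q : ℕ × ℤ) :
    Integrable (fun a => ω p a * ω q a) P := by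
  refine (integrable_const 1).mono' ((hω.2.1 p).mul (hω.2.1 q)).aestronglyMeasurable ?_
  filter_upwards [hω.ae_eq_one_or_eq_neg_one p, hω.ae_eq_one_or_eq_neg_one q] with a hp hq
  rcases hp with hp | hp <;> rcases hq with hq | hq <;> simp [hp, hq]

theorem integral_mul (hω : IsRademacher P ω) (p q : ℕ × ℤ) :
    ∫ a, ω p a * ω q a ∂P = if p = q then 1 else 0 := by
  split_ifs with hpq
  · subst hpq
    have hsq : (fun a => ω p a * ω p a) =ᵐ[P] fun _ => 1 := by
      filter_upwards [hω.ae_eq_one_or_eq_neg_one p] with a ha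
      rcases ha with ha | ha <;> simp [ha]
    simp [integral_congr_ae hsq]
  · rw [(hω.1.indepFun hpq).integral_fun_mul_eq_mul_integral (hω.2.1 p).aestronglyMeasurable
      (hω.2.1 q).aestronglyMeasurable, hω.integral_eq_zero p, zero_mul]

end IsRademacher

theorem integral_sq_finset_sum_of_orthonormal {Ω ι : Type*} [MeasurableSpace Ω]
    {P : Measure Ω} [DecidableEq ι] (X : ι → Ω → ℝ)
    (hint : ∀ p q, Integrable (fun a => X p a * X q a) P)
    (horth : ∀ p q, ∫ a, X p a * X q a ∂P = if p = q then 1 else 0) (T : Finset ι) (c : ι → ℝ) :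
    ∫ a, (∑ p ∈ T, c p * X p a) ^ 2 ∂P = ∑ p ∈ T, c p ^ 2 := by
  have hexpand : ∀ a, (∑ p ∈ T, c p * X p a) ^ 2
      = ∑ p ∈ T, ∑ q ∈ T, c p * c q * (X p a * X q a) := fun a => by
    rw [sq, Finset.sum_mul_sum]
    exact Finset.sum_congr rfl fun p _ => Finset.sum_congr rfl fun q _ => by ring
  simp_rw [hexpand]
  rw [integral_finsetSum _ fun p _ => integrable_finsetSum _ fun q _ => (hint p q).const_mul _]
  refine Finset.sum_congr rfl fun p hp => ?_
  rw [integral_finsetSum _ fun q _ => (hint p q).const_mul _]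
  simp_rw [integral_const_mul, horth, mul_ite, mul_one, mul_zero, Finset.sum_ite_eq, if_pos hp, sq]

def gridRect (N i : ℕ) (z : ℤ) : Set (ℝ × ℝ) :=
  Ioc (((i : ℝ) - 1) / N) ((i : ℝ) / N) ×ˢ Ioc (((z : ℝ) - 1) / √N) (((z : ℝ) + 1) / √N)

/-- The grid point `[t,x]_N`. -/
noncomputable def gridPoint (N : ℕ) (q : ℝ × ℝ) : ℕ × ℤ := (gridTime N q.1, gridSpace N q.1 q.2)

section Grid

variable {N : ℕ}

theorem gridTime_eq_iff (hN : 0 < N) {t : ℝ} (ht : 0 < t) {i : ℕ} :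
    gridTime N t = i ↔ t ∈ Ioc (((i : ℝ) - 1) / N) ((i : ℝ) / N) := by
  have hN' : (0 : ℝ) < N := Nat.cast_pos.2 hN
  rw [mem_Ioc, div_lt_iff₀ hN', le_div_iff₀ hN', gridTime]
  rcases Nat.eq_zero_or_pos i with rfl | hi
  · simp only [Nat.ceil_eq_zero, CharP.cast_eq_zero]
    constructor <;> intro h <;> nlinarith [h]
  · rw [Nat.ceil_eq_iff hi.ne', Nat.cast_sub hi, Nat.cast_one, mul_comm t]

theorem gridSpace_emod_two (N : ℕ) (t x : ℝ) :
    (gridTime N t : ℤ) % 2 = gridSpace N t x % 2 := by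
  rw [gridSpace]; omega

theorem gridSpace_eq_iff (hN : 0 < N) {t x : ℝ} {z : ℤ}
    (hz : (gridTime N t : ℤ) % 2 = z % 2) :
    gridSpace N t x = z ↔ x ∈ Ioc (((z : ℝ) - 1) / √N) (((z : ℝ) + 1) / √N) := by
  have hs : 0 < √(N : ℝ) := Real.sqrt_pos.2 (Nat.cast_pos.2 hN)
  obtain ⟨k, rfl⟩ : ∃ k : ℤ, z = gridTime N t + 2 * k := ⟨(z - gridTime N t) / 2, by omega⟩
  rw [mem_Ioc, div_lt_iff₀ hs, le_div_iff₀ hs, gridSpace, add_right_inj,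
    mul_right_inj' two_ne_zero, Int.ceil_eq_iff]
  push_cast
  constructor <;> rintro ⟨h1, h2⟩ <;> constructor <;> linarith

theorem mem_gridRect_iff (hN : 0 < N) {q : ℝ × ℝ} (hq : 0 < q.1) {i : ℕ} {z : ℤ}
    (hiz : (i : ℤ) % 2 = z % 2) : q ∈ gridRect N i z ↔ gridPoint N q = (i, z) := by
  rw [gridRect, mem_prod, gridPoint, Prod.mk.injEq, gridTime_eq_iff hN hq]
  exact and_congr_right fun hi =>
    (gridSpace_eq_iff hN (by rwa [(gridTime_eq_iff hN hq).2 hi])).symm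

theorem mem_gridRect_gridPoint (hN : 0 < N) {q : ℝ × ℝ} (hq : 0 < q.1) :
    q ∈ gridRect N (gridPoint N q).1 (gridPoint N q).2 :=
  (mem_gridRect_iff hN hq (gridSpace_emod_two N q.1 q.2)).2 rfl

theorem one_le_gridTime (hN : 0 < N) {t : ℝ} (ht : 0 < t) : 1 ≤ gridTime N t :=
  Nat.one_le_iff_ne_zero.2 fun h => by
    have := ((gridTime_eq_iff hN ht).1 h).2
    simp only [CharP.cast_eq_zero, zero_div] at this
    linarith

theorem gridTime_le {t : ℝ} (ht : t ≤ 1) : gridTime N t ≤ N :=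
  Nat.ceil_le.2 (by nlinarith [(Nat.cast_nonneg N : (0 : ℝ) ≤ N)])

theorem measurable_gridPoint (N : ℕ) : Measurable (gridPoint N) := by
  have htime : Measurable fun q : ℝ × ℝ => gridTime N q.1 :=
    Nat.measurable_ceil.comp (measurable_fst.const_mul _)
  have hcast : Measurable fun q : ℝ × ℝ => ((gridTime N q.1 : ℤ) : ℝ) :=
    (measurable_of_countable fun n : ℕ => ((n : ℤ) : ℝ)).comp htime
  have hceil : Measurable fun q : ℝ × ℝ =>
      ⌈(√N * q.2 - 1 - ((gridTime N q.1 : ℤ) : ℝ)) / 2⌉ :=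
    Int.measurable_ceil.comp
      ((((measurable_snd.const_mul _).sub measurable_const).sub hcast).div_const 2)
  exact htime.prodMk ((measurable_of_countable fun p : ℕ × ℤ => (p.1 : ℤ) + 2 * p.2).comp
    (htime.prodMk hceil))

theorem measurableSet_gridRect (N i : ℕ) (z : ℤ) : MeasurableSet (gridRect N i z) :=
  measurableSet_Ioc.prod measurableSet_Ioc

theorem volume_gridRect (hN : 0 < N) (i : ℕ) (z : ℤ) :
    volume (gridRect N i z) = ENNReal.ofReal (2 / (N * √N)) := by
  have htime : (i : ℝ) / N - ((i : ℝ) - 1) / N = 1 / N := by ring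
  have hspace : ((z : ℝ) + 1) / √N - ((z : ℝ) - 1) / √N = 2 / √N := by ring
  rw [gridRect, Measure.volume_eq_prod, Measure.prod_prod, Real.volume_Ioc, Real.volume_Ioc,
    htime, hspace, ← ENNReal.ofReal_mul (by positivity)]
  congr 1
  field_simp

theorem dist_le_of_mem_gridRect (hN : 0 < N) {i : ℕ} {z : ℤ} {y y' : ℝ × ℝ}
    (hy : y ∈ gridRect N i z) (hy' : y' ∈ gridRect N i z) : dist y y' ≤ 2 / √N := by
  have hN' : (1 : ℝ) ≤ N := Nat.one_le_cast.2 hN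
  have hs : 0 < √(N : ℝ) := by positivity
  have hwidth : 1 / (N : ℝ) ≤ 2 / √N := by
    rw [div_le_div_iff₀ (by positivity) hs]
    nlinarith [Real.sqrt_le_sqrt hN', Real.sq_sqrt (zero_le_one.trans hN'), Real.sqrt_one]
  obtain ⟨⟨h1, h2⟩, h3, h4⟩ := hy
  obtain ⟨⟨h1', h2'⟩, h3', h4'⟩ := hy'
  rw [Prod.dist_eq, Real.dist_eq, Real.dist_eq, max_le_iff, abs_le, abs_le]
  have htime : (i : ℝ) / N - ((i : ℝ) - 1) / N = 1 / N := by ring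
  have hspace : ((z : ℝ) + 1) / √N - ((z : ℝ) - 1) / √N = 2 / √N := by ring
  refine ⟨⟨?_, ?_⟩, ?_, ?_⟩ <;> linarith

end Grid

theorem Real.rpow_three_halves {x : ℝ} (hx : 0 ≤ x) : x ^ ((3 : ℝ) / 2) = x * √x := by
  rw [show (3 : ℝ) / 2 = 1 + 1 / 2 by norm_num, Real.rpow_add' hx (by norm_num), Real.rpow_one,
    Real.sqrt_eq_rpow]

section RectAvg

variable {g : ℝ × ℝ → ℝ} {N : ℕ}

theorem rectAvg1_eq_setAverage (hN : 0 < N) (i : ℕ) (z : ℤ) :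
    rectAvg1 g N i z = ⨍ y in gridRect N i z, g y := by
  have hN' : (0 : ℝ) < N := Nat.cast_pos.2 hN
  rw [setAverage_eq, measureReal_def, volume_gridRect hN, ENNReal.toReal_ofReal (by positivity),
    rectAvg1, Real.rpow_three_halves hN'.le, smul_eq_mul, inv_div]
  rfl

theorem exists_mem_gridRect_rectAvg1_eq (hN : 0 < N) (hg : Continuous g) (i : ℕ) (z : ℤ) :
    ∃ y ∈ gridRect N i z, rectAvg1 g N i z = g y := by
  have hvol : volume (gridRect N i z) = ENNReal.ofReal (2 / (N * √N)) := volume_gridRect hN i z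
  have hconn : IsConnected (gridRect N i z) :=
    (isConnected_Ioc (by gcongr; linarith)).prod (isConnected_Ioc (by gcongr; linarith))
  have hint : IntegrableOn g (gridRect N i z) :=
    (hg.continuousOn.integrableOn_compact (isCompact_Icc.prod isCompact_Icc)).mono_set
      (prod_mono Ioc_subset_Icc_self Ioc_subset_Icc_self)
  obtain ⟨y, hy, hgy⟩ := exists_eq_setAverage hconn hg.continuousOn hint
    (hvol ▸ ENNReal.ofReal_ne_top) (by rw [hvol]; exact ENNReal.ofReal_pos.2 (by positivity) |>.ne')
  exact ⟨y, hy, (rectAvg1_eq_setAverage hN i z).trans hgy.symm⟩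

theorem abs_rectAvg1_le (hN : 0 < N) (hg : Continuous g) {M : ℝ} (hM : ∀ y, |g y| ≤ M)
    (i : ℕ) (z : ℤ) : |rectAvg1 g N i z| ≤ M := by
  obtain ⟨y, -, hy⟩ := exists_mem_gridRect_rectAvg1_eq hN hg i z
  exact hy ▸ hM y

theorem tendsto_rectAvg1_gridPoint (hg : Continuous g) {q : ℝ × ℝ} (hq : 0 < q.1) :
    Tendsto (fun N => rectAvg1 g N (gridPoint N q).1 (gridPoint N q).2) atTop (𝓝 (g q)) := by
  rw [← Filter.tendsto_add_atTop_iff_nat 1]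
  choose y hy hgy using fun N : ℕ =>
    exists_mem_gridRect_rectAvg1_eq N.succ_pos hg (gridPoint (N + 1) q).1 (gridPoint (N + 1) q).2
  have hdist : ∀ N : ℕ, dist (y N) q ≤ 2 / √(N + 1 : ℕ) := fun N =>
    dist_le_of_mem_gridRect N.succ_pos (hy N) (mem_gridRect_gridPoint N.succ_pos hq)
  have hshrink : Tendsto (fun N : ℕ => 2 / √(N + 1 : ℕ)) atTop (𝓝 0) :=
    (tendsto_const_nhds.div_atTop (Real.tendsto_sqrt_atTop.comp tendsto_natCast_atTop_atTop)).comp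
      (Filter.tendsto_add_atTop_nat 1)
  have hyq : Tendsto y atTop (𝓝 q) :=
    tendsto_iff_dist_tendsto_zero.2 (squeeze_zero (fun _ => dist_nonneg) hdist hshrink)
  exact ((hg.tendsto q).comp hyq).congr fun N => (hgy N).symm

variable {R : ℝ}

theorem rectAvg1_eq_zero_of_lt_abs (hN : 0 < N) (hg : Continuous g)
    (hR : ∀ y, g y ≠ 0 → |y.2| ≤ R) (i : ℕ) {z : ℤ} (hz : ((⌈R * √N⌉₊ + 1 : ℕ) : ℤ) < |z|) :
    rectAvg1 g N i z = 0 := by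
  have hs : 0 < √(N : ℝ) := Real.sqrt_pos.2 (Nat.cast_pos.2 hN)
  by_contra h
  obtain ⟨y, ⟨-, hy1, hy2⟩, hgy⟩ := exists_mem_gridRect_rectAvg1_eq hN hg i z
  have hyR := abs_le.1 (hR y (hgy ▸ h))
  have hz' : (⌈R * √N⌉₊ : ℝ) + 1 < |(z : ℝ)| := by exact_mod_cast hz
  rw [div_lt_iff₀ hs] at hy1
  rw [le_div_iff₀ hs] at hy2
  rcases lt_abs.1 hz' with hz' | hz' <;> nlinarith [Nat.le_ceil (R * √N)]

theorem abs_le_of_rectAvg1_gridPoint_ne_zero (hN : 0 < N) (hg : Continuous g)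
    (hR : ∀ y, g y ≠ 0 → |y.2| ≤ R) {q : ℝ × ℝ} (hq : 0 < q.1)
    (h : rectAvg1 g N (gridPoint N q).1 (gridPoint N q).2 ≠ 0) : |q.2| ≤ R + 2 := by
  have hs : 1 ≤ √(N : ℝ) := Real.one_le_sqrt.2 (Nat.one_le_cast.2 hN)
  obtain ⟨y, hy, hgy⟩ := exists_mem_gridRect_rectAvg1_eq hN hg _ _
  have hyq : |y.2 - q.2| ≤ 2 := by
    have := (dist_le_of_mem_gridRect hN hy (mem_gridRect_gridPoint hN hq)).trans
      (div_le_self zero_le_two hs)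
    rw [Prod.dist_eq, max_le_iff, Real.dist_eq, Real.dist_eq] at this
    exact this.2
  have hyR := abs_le.1 (hR y (hgy ▸ h))
  have hyq' := abs_le.1 hyq
  exact abs_le.2 ⟨by linarith, by linarith⟩

end RectAvg

noncomputable def gridBox (N K : ℕ) : Finset (ℕ × ℤ) :=
  (Finset.Icc 1 N ×ˢ Finset.Icc (-(K : ℤ)) K).filter fun p => (p.1 : ℤ) % 2 = p.2 % 2

theorem gridRect_subset {N i : ℕ} (hi : 1 ≤ i) (hiN : i ≤ N) (z : ℤ) :
    gridRect N i z ⊆ Ioc 0 1 ×ˢ univ := by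
  rintro q ⟨⟨hq0, hq1⟩, -⟩
  have hi' : (1 : ℝ) ≤ i := Nat.one_le_cast.2 hi
  have hiN' : (i : ℝ) ≤ N := Nat.cast_le.2 hiN
  refine ⟨⟨(div_nonneg (by linarith) (Nat.cast_nonneg N)).trans_lt hq0, hq1.trans ?_⟩, trivial⟩
  exact div_le_one_of_le₀ hiN' (Nat.cast_nonneg N)

noncomputable def cellWeight (g : ℝ × ℝ → ℝ) (A : ℕ × ℤ → ℝ) (N : ℕ) (p : ℕ × ℤ) : ℝ :=
  (rectAvg1 g N p.1 p.2 * A p) ^ 2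

theorem Ustat1_eq_sum_gridBox {Ω : Type*} (ω : ℕ × ℤ → Ω → ℝ) (A : ℕ × ℤ → ℝ) {g : ℝ × ℝ → ℝ}
    {N K : ℕ} (hK : ∀ i z, (K : ℤ) < |z| → rectAvg1 g N i z = 0) (a : Ω) :
    Ustat1 ω A N g a = √2 * ∑ p ∈ gridBox N K, rectAvg1 g N p.1 p.2 * A p * ω p a := by
  rw [Ustat1, gridBox, Finset.sum_filter, Finset.sum_product]
  refine congrArg _ (Finset.sum_congr rfl fun i _ => ?_)
  rw [tsum_eq_sum (s := Finset.Icc (-(K : ℤ)) K) fun z hz => by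
    rw [hK i z (not_le.1 fun h => hz (Finset.mem_Icc.2 (abs_le.1 h))), zero_mul, zero_mul,
      mul_zero]]
  refine Finset.sum_congr rfl fun z _ => ?_
  unfold indi
  split_ifs <;> simp

theorem integral_Ustat1_sq {Ω : Type*} [MeasurableSpace Ω] {P : Measure Ω}
    [IsProbabilityMeasure P] {ω : ℕ × ℤ → Ω → ℝ} (hω : IsRademacher P ω) (A : ℕ × ℤ → ℝ)
    {g : ℝ × ℝ → ℝ} {N K : ℕ} (hK : ∀ i z, (K : ℤ) < |z| → rectAvg1 g N i z = 0) :
    ∫ a, Ustat1 ω A N g a ^ 2 ∂P = 2 * ∑ p ∈ gridBox N K, cellWeight g A N p := by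
  simp_rw [Ustat1_eq_sum_gridBox ω A hK, mul_pow, Real.sq_sqrt zero_le_two]
  rw [integral_const_mul, integral_sq_finset_sum_of_orthonormal ω hω.integrable_mul
    hω.integral_mul]
  rfl

theorem setIntegral_comp_gridPoint {N : ℕ} (hN : 0 < N) {K : ℕ} {w : ℕ × ℤ → ℝ}
    (hw : ∀ p : ℕ × ℤ, (K : ℤ) < |p.2| → w p = 0) :
    ∫ q in Ioc 0 1 ×ˢ univ, w (gridPoint N q) = 2 / (N * √N) * ∑ p ∈ gridBox N K, w p := by
  classical
  have hbox : ∀ p ∈ gridBox N K, 1 ≤ p.1 ∧ p.1 ≤ N ∧ (p.1 : ℤ) % 2 = p.2 % 2 := fun p hp => by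
    simp only [gridBox, Finset.mem_filter, Finset.mem_product, Finset.mem_Icc] at hp
    exact ⟨hp.1.1.1, hp.1.1.2, hp.2⟩
  have hstep : ∀ q ∈ Ioc (0 : ℝ) 1 ×ˢ univ, w (gridPoint N q)
      = ∑ p ∈ gridBox N K, (gridRect N p.1 p.2).indicator (fun _ => w p) q := by
    rintro q ⟨⟨hq0, hq1⟩, -⟩
    calc w (gridPoint N q) = ∑ p ∈ gridBox N K, if gridPoint N q = p then w p else 0 := by
          rw [Finset.sum_ite_eq]
          split_ifs with h
          · rfl
          refine hw _ (not_le.1 fun hz => h ?_)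
          simp only [gridBox, Finset.mem_filter, Finset.mem_product, Finset.mem_Icc]
          exact ⟨⟨⟨one_le_gridTime hN hq0, gridTime_le hq1⟩, abs_le.1 hz⟩,
            gridSpace_emod_two N q.1 q.2⟩
      _ = _ := Finset.sum_congr rfl fun p hp => by
          rw [indicator_apply]
          exact if_congr (mem_gridRect_iff hN hq0 (hbox p hp).2.2).symm rfl rfl
  have hcell : ∀ p ∈ gridBox N K, ∫ q in Ioc 0 1 ×ˢ univ,
      (gridRect N p.1 p.2).indicator (fun _ => w p) q = 2 / (N * √N) * w p := fun p hp => by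
    rw [integral_indicator_const _ (measurableSet_gridRect N p.1 p.2),
      measureReal_restrict_apply (measurableSet_gridRect N p.1 p.2),
      inter_eq_left.2 (gridRect_subset (hbox p hp).1 (hbox p hp).2.1 p.2), measureReal_def,
      volume_gridRect hN, ENNReal.toReal_ofReal (by positivity), smul_eq_mul]
  have hint : ∀ p ∈ gridBox N K, Integrable
      ((gridRect N p.1 p.2).indicator (fun _ => w p)) (volume.restrict (Ioc 0 1 ×ˢ univ)) :=
    fun p _ => ((integrableOn_const (volume_gridRect hN p.1 p.2 ▸ ENNReal.ofReal_ne_top)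
      ).integrable_indicator (measurableSet_gridRect N p.1 p.2)).restrict
  rw [setIntegral_congr_fun (measurableSet_Ioc.prod MeasurableSet.univ) hstep,
    integral_finsetSum _ hint, Finset.mul_sum]
  exact Finset.sum_congr rfl hcell

theorem setIntegral_cellWeight_gridPoint {Ω : Type*} [MeasurableSpace Ω] {P : Measure Ω}
    [IsProbabilityMeasure P] {ω : ℕ × ℤ → Ω → ℝ} (hω : IsRademacher P ω) {N : ℕ} (hN : 0 < N)
    {g : ℝ × ℝ → ℝ} (hg : Continuous g) {R : ℝ} (hR : ∀ y, g y ≠ 0 → |y.2| ≤ R)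
    (A : ℕ × ℤ → ℝ) :
    ∫ q in Ioc 0 1 ×ˢ univ, cellWeight g A N (gridPoint N q)
      = (N : ℝ) ^ (-(3/2 : ℝ)) * ∫ a, Ustat1 ω A N g a ^ 2 ∂P := by
  have hK := rectAvg1_eq_zero_of_lt_abs hN hg hR
  have hw : ∀ p : ℕ × ℤ, ((⌈R * √N⌉₊ + 1 : ℕ) : ℤ) < |p.2| → cellWeight g A N p = 0 :=
    fun p hp => by rw [cellWeight, hK p.1 hp, zero_mul, sq, zero_mul]
  rw [setIntegral_comp_gridPoint hN hw, integral_Ustat1_sq hω A hK,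
    Real.rpow_neg (Nat.cast_nonneg _), Real.rpow_three_halves (Nat.cast_nonneg _)]
  ring

theorem cellWeight_gridPoint_le_indicator {g : ℝ × ℝ → ℝ} {N : ℕ} (hN : 0 < N)
    (hg : Continuous g) {M : ℝ} (hM : ∀ y, |g y| ≤ M) {R : ℝ} (hR : ∀ y, g y ≠ 0 → |y.2| ≤ R)
    {A : ℕ × ℤ → ℝ} {c : ℝ} (hA : ∀ p, |A p| ≤ c) {q : ℝ × ℝ} (hq : q ∈ Ioc 0 1 ×ˢ univ) :
    ‖cellWeight g A N (gridPoint N q)‖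
      ≤ (Ioc 0 1 ×ˢ Icc (-(R + 2)) (R + 2)).indicator (fun _ => (M * c) ^ 2) q := by
  rw [cellWeight, Real.norm_of_nonneg (sq_nonneg _)]
  by_cases hq2 : |q.2| ≤ R + 2
  · have hqB : q ∈ Ioc 0 1 ×ˢ Icc (-(R + 2)) (R + 2) := ⟨hq.1, abs_le.1 hq2⟩
    rw [indicator_of_mem hqB, ← sq_abs, abs_mul]
    exact pow_le_pow_left₀ (by positivity) (mul_le_mul (abs_rectAvg1_le hN hg hM _ _) (hA _)
      (abs_nonneg _) ((abs_nonneg _).trans (hM 0))) 2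
  · have h0 : rectAvg1 g N (gridPoint N q).1 (gridPoint N q).2 = 0 := by
      by_contra h
      exact hq2 (abs_le_of_rectAvg1_gridPoint_ne_zero hN hg hR hq.1.1 h)
    rw [h0, zero_mul, sq, zero_mul]
    exact indicator_nonneg (fun _ _ => sq_nonneg _) q

theorem volume_restrict_Icc_prod {a b : ℝ} (s : Set ℝ) :
    (volume.restrict (Icc a b ×ˢ s) : Measure (ℝ × ℝ)) = volume.restrict (Ioc a b ×ˢ s) := by
  rw [Measure.volume_eq_prod, ← Measure.prod_restrict, ← Measure.prod_restrict,
    Measure.restrict_congr_set Ioc_ae_eq_Icc]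

theorem statement5_general
    {Ω : Type*} [MeasurableSpace Ω] (P : Measure Ω) [IsProbabilityMeasure P]
    (ω : ℕ × ℤ → Ω → ℝ) (hω : IsRademacher P ω)
    (A : ℕ → ℕ × ℤ → ℝ) (c : ℝ) (hA : ∀ N p, |A N p| ≤ c)
    (aa : ℝ × ℝ → ℝ)
    (hconv : ∀ᵐ q ∂(volume.restrict (Set.Icc (0 : ℝ) 1 ×ˢ (Set.univ : Set ℝ))),
      Tendsto (fun N : ℕ => A N (gridTime N q.1, gridSpace N q.1 q.2)) atTop (𝓝 (aa q)))
    (g : ℝ × ℝ → ℝ) (hg : Continuous g) (hgcs : HasCompactSupport g) :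
    Tendsto (fun N : ℕ => (N : ℝ) ^ (-(3/2 : ℝ)) * ∫ a, (Ustat1 ω (A N) N g a) ^ 2 ∂P)
      atTop
      (𝓝 (∫ q in Set.Icc (0 : ℝ) 1 ×ˢ (Set.univ : Set ℝ), (g q) ^ 2 * (aa q) ^ 2)) := by
  obtain ⟨R, hR⟩ := hgcs.isCompact.isBounded.subset_closedBall 0
  have hgR : ∀ y, g y ≠ 0 → |y.2| ≤ R := fun y hy =>
    (norm_snd_le y).trans (mem_closedBall_zero_iff.1 (hR (subset_tsupport g hy)))
  obtain ⟨M, hM⟩ := hg.bounded_above_of_compact_support hgcs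
  rw [volume_restrict_Icc_prod] at hconv ⊢
  rw [← Filter.tendsto_add_atTop_iff_nat 1]
  refine (tendsto_integral_of_dominated_convergence
    (F := fun N q => cellWeight g (A (N + 1)) (N + 1) (gridPoint (N + 1) q))
    ((Ioc 0 1 ×ˢ Icc (-(R + 2)) (R + 2)).indicator fun _ => (M * c) ^ 2)
    (fun N => ((measurable_of_countable (cellWeight g (A (N + 1)) (N + 1))).comp
      (measurable_gridPoint _)).aestronglyMeasurable)
    ((integrableOn_const ((Metric.isBounded_Ioc 0 1).prod (Metric.isBounded_Icc _ _)
      ).measure_lt_top.ne).integrable_indicator (measurableSet_Ioc.prod measurableSet_Icc)).restrict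
    (fun N => ?_) ?_).congr
    fun N => setIntegral_cellWeight_gridPoint hω N.succ_pos hg hgR (A (N + 1))
  · filter_upwards [ae_restrict_mem (measurableSet_Ioc.prod MeasurableSet.univ)] with q hq
    exact cellWeight_gridPoint_le_indicator N.succ_pos hg hM hgR (hA _) hq
  · filter_upwards [ae_restrict_mem (measurableSet_Ioc.prod MeasurableSet.univ), hconv]
      with q hq hAq
    rw [← mul_pow]
    exact (Filter.tendsto_add_atTop_iff_nat 1).2
      (((tendsto_rectAvg1_gridPoint hg hq.1.1).mul hAq).pow 2)

/-- Suppose `sup_N ‖A_N‖_∞ < ∞` and `A_N([t,x]_N) → a(t,x)` a.e. on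
`[0,1] × ℝ` for a bounded measurable `a`. Then for every continuous compactly supported
`g`, `lim_N N^{-3/2} E[(S^N_1(g))²] = ∫_{[0,1]×ℝ} g² a²`. -/
theorem statement5
    {Ω : Type*} [MeasurableSpace Ω] (P : Measure Ω) [IsProbabilityMeasure P]
    (ω : ℕ × ℤ → Ω → ℝ) (hω : IsRademacher P ω)
    (A : ℕ → ℕ × ℤ → ℝ) (c : ℝ) (hA : ∀ N p, |A N p| ≤ c)
    (aa : ℝ × ℝ → ℝ) (hameas : Measurable aa) (C : ℝ) (haC : ∀ q, |aa q| ≤ C)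
    (hconv : ∀ᵐ q ∂(volume.restrict (Set.Icc (0 : ℝ) 1 ×ˢ (Set.univ : Set ℝ))),
      Tendsto (fun N : ℕ => A N (gridTime N q.1, gridSpace N q.1 q.2)) atTop (𝓝 (aa q)))
    (g : ℝ × ℝ → ℝ) (hg : Continuous g) (hgcs : HasCompactSupport g) :
    Tendsto (fun N : ℕ => (N : ℝ) ^ (-(3/2 : ℝ)) * ∫ a, (Ustat1 ω (A N) N g a) ^ 2 ∂P)
      atTop
      (𝓝 (∫ q in Set.Icc (0 : ℝ) 1 ×ˢ (Set.univ : Set ℝ), (g q) ^ 2 * (aa q) ^ 2)) :=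
  statement5_general P ω hω A c hA aa hconv g hg hgcs
end

section
/- For every positive integer n, the squared L² norm of the n-fold Gaussian transition density on the simplex satisfies ∫_{[0,1]^n} ∫_{ℝ^n} ϱ_n(t,x)² dx dt = 1 / (2^n Γ(n/2 + 1)), where Γ is the Gamma function. -/
open MeasureTheory ProbabilityTheory Filter Topology

/-!
Squaring the heat kernel gives `ϱ(s,y)² = (4πs)^{-1/2} ϱ(s/2,y)`, so after the unimodular change
of variables `x ↦ (x_j - x_{j-1})_j` the space integral factorises into `∏_j (4π s_j)^{-1/2}` with
`s_j = t_j - t_{j-1}`. The same change of variables in time maps `Δ_n` onto the corner simplex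
`{s > 0, ∑ s ≤ 1}`, where Dirichlet's integral `∫ ∏ s_j^{a_j - 1} = ∏ Γ(a_j) / Γ(∑ a_j + 1)`
(one coordinate at a time, each step a Beta integral) gives `Γ(1/2)^n / Γ(n/2 + 1)` for `a_j = 1/2`.
-/

open Real Set

def cornerSimplex (n : ℕ) (u : ℝ) : Set (Fin n → ℝ) := {s | (∀ j, 0 < s j) ∧ ∑ j, s j ≤ u}

section Increments

variable {n : ℕ}

@[simp]
lemma prev_zero {α : Type*} [Zero α] (t : Fin (n + 1) → α) : prev t 0 = 0 := by
  simp [prev]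

@[simp]
lemma prev_succ {α : Type*} [Zero α] (t : Fin (n + 1) → α) (i : Fin n) :
    prev t i.succ = t i.castSucc := by
  simp [prev]; rfl

lemma prev_castSucc {α : Type*} [Zero α] (t : Fin (n + 1) → α) (i : Fin n) :
    prev t i.castSucc = prev (fun j => t j.castSucc) i := by
  simp [prev]

lemma prev_add {α : Type*} [AddZeroClass α] (s t : Fin n → α) (j : Fin n) :
    prev (s + t) j = prev s j + prev t j := by
  unfold prev; split_ifs <;> simp

lemma prev_smul {α : Type*} [Zero α] [SMulZeroClass ℝ α] (c : ℝ) (t : Fin n → α) (j : Fin n) :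
    prev (c • t) j = c • prev t j := by
  unfold prev; split_ifs <;> simp

def increments (n : ℕ) : (Fin n → ℝ) →ₗ[ℝ] (Fin n → ℝ) where
  toFun t j := t j - prev t j
  map_add' s t := by ext j; simp only [Pi.add_apply, prev_add]; ring
  map_smul' c t := by
    ext j; simp only [Pi.smul_apply, prev_smul, smul_eq_mul, RingHom.id_apply]; ring

@[simp]
lemma increments_apply (t : Fin n → ℝ) (j : Fin n) : increments n t j = t j - prev t j := rfl

lemma det_increments : LinearMap.det (increments n) = 1 := by
  classical
  rw [← LinearMap.det_toMatrix', Matrix.det_of_isLowerTriangular]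
  · refine Finset.prod_eq_one fun j _ => ?_
    simp only [LinearMap.toMatrix'_apply, increments_apply, Pi.single_eq_same, prev]
    split_ifs with h
    · simp
    · rw [Pi.single_eq_of_ne (by simp [Fin.ext_iff]; omega)]; simp
  · intro i j hij
    simp only [OrderDual.toDual_lt_toDual] at hij
    simp only [LinearMap.toMatrix'_apply, increments_apply, Pi.single_eq_of_ne hij.ne, prev]
    split_ifs with h
    · simp
    · rw [Pi.single_eq_of_ne (by simp [Fin.ext_iff]; have := Fin.lt_def.mp hij; omega)]
      simp

lemma measurePreserving_increments : MeasurePreserving (increments n) :=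
  ⟨(increments n).continuous_of_finiteDimensional.measurable, by
    rw [Real.map_linearMap_volume_pi_eq_smul_volume_pi (by simp [det_increments])]
    simp [det_increments]⟩

lemma sum_increments (t : Fin (n + 1) → ℝ) : ∑ j, increments (n + 1) t j = t (Fin.last n) := by
  induction n with
  | zero => simp
  | succ n ih =>
    rw [Fin.sum_univ_castSucc, ← Fin.succ_last]
    simp only [increments_apply, prev_castSucc, prev_succ] at ih ⊢
    rw [ih (fun j => t j.castSucc)]
    simp

lemma simplex_iff_increments_mem_cornerSimplex (t : Fin n → ℝ) :
    ((∀ j, 0 < t j ∧ t j ≤ 1) ∧ StrictMono t) ↔ increments n t ∈ cornerSimplex n 1 := by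
  simp only [cornerSimplex, mem_ofPred_eq]
  cases n with
  | zero => simp [Subsingleton.strictMono]
  | succ n =>
    have hpos : (∀ j, 0 < increments (n + 1) t j) ↔
        0 < t 0 ∧ ∀ i : Fin n, t i.castSucc < t i.succ := by
      simp [Fin.forall_fin_succ]
    rw [sum_increments, hpos, ← Fin.strictMono_iff_lt_succ]
    constructor
    · rintro ⟨hbound, hmono⟩
      exact ⟨⟨(hbound 0).1, hmono⟩, (hbound _).2⟩
    · rintro ⟨⟨h0, hmono⟩, hlast⟩
      exact ⟨fun j => ⟨h0.trans_le (hmono.monotone (Fin.zero_le j)),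
        (hmono.monotone (Fin.le_last j)).trans hlast⟩, hmono⟩

end Increments

lemma lintegral_Ioo_rpow_mul_rpow {a b u : ℝ} (ha : 0 < a) (hb : 0 < b) (hu : 0 < u) :
    ∫⁻ y in Ioo 0 u, ENNReal.ofReal (y ^ (a - 1) * (u - y) ^ (b - 1)) =
      ENNReal.ofReal (beta a b * u ^ (a + b - 1)) := by
  have hunit : ∫⁻ x in Ioo 0 1, ENNReal.ofReal (x ^ (a - 1) * (1 - x) ^ (b - 1)) =
      ENNReal.ofReal (beta a b) := by
    have h := lintegral_betaPDF_eq_one ha hb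
    simp_rw [lintegral_betaPDF, mul_assoc, ENNReal.ofReal_mul (one_div_pos.2 (beta_pos ha hb)).le,
      lintegral_const_mul' _ _ ENNReal.ofReal_ne_top] at h
    rw [mul_comm] at h
    rw [ENNReal.eq_inv_of_mul_eq_one_left h,
      ← ENNReal.ofReal_inv_of_pos (one_div_pos.2 (beta_pos ha hb)), one_div, inv_inv]
  have himage : Ioo 0 u = (u * ·) '' Ioo 0 1 := by simp [image_mul_left_Ioo hu]
  rw [himage,
    lintegral_image_eq_lintegral_abs_deriv_mul (f' := fun _ => u) measurableSet_Ioo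
      (fun x _ => (hasDerivAt_const_mul u).hasDerivWithinAt)
      (mul_right_injective₀ hu.ne').injOn]
  calc ∫⁻ x in Ioo 0 1, ENNReal.ofReal |u| *
        ENNReal.ofReal ((u * x) ^ (a - 1) * (u - u * x) ^ (b - 1))
      = ∫⁻ x in Ioo 0 1, ENNReal.ofReal (u ^ (a + b - 1)) *
          ENNReal.ofReal (x ^ (a - 1) * (1 - x) ^ (b - 1)) := by
        refine setLIntegral_congr_fun measurableSet_Ioo fun x hx => ?_
        rw [← ENNReal.ofReal_mul (abs_nonneg _), ← ENNReal.ofReal_mul (by positivity),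
          ← mul_one_sub, mul_rpow hu.le hx.1.le, mul_rpow hu.le (sub_pos.2 hx.2).le,
          abs_of_pos hu, show a + b - 1 = (a - 1) + (b - 1) + 1 by ring, rpow_add hu, rpow_add hu,
          rpow_one]
        ring_nf
    _ = ENNReal.ofReal (beta a b * u ^ (a + b - 1)) := by
        rw [lintegral_const_mul' _ _ ENNReal.ofReal_ne_top, hunit,
          ← ENNReal.ofReal_mul (by positivity), mul_comm]

section CornerSimplex

variable {n : ℕ}

lemma measurableSet_cornerSimplex (u : ℝ) : MeasurableSet (cornerSimplex n u) := by
  simp only [cornerSimplex, ofPred_and, ofPred_forall]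
  exact (MeasurableSet.iInter fun j =>
    measurableSet_lt measurable_const (measurable_pi_apply j)).inter
    (measurableSet_le (by fun_prop) measurable_const)

lemma cornerSimplex_eq_empty {u : ℝ} (hu : u < 0) : cornerSimplex n u = ∅ :=
  eq_empty_of_forall_notMem fun _ hs =>
    (hu.trans_le (Finset.sum_nonneg fun j _ => (hs.1 j).le)).not_ge hs.2

lemma cons_mem_cornerSimplex_iff (u y : ℝ) (p : Fin n → ℝ) :
    Fin.cons y p ∈ cornerSimplex (n + 1) u ↔ 0 < y ∧ p ∈ cornerSimplex n (u - y) := by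
  simp only [cornerSimplex, mem_ofPred_eq, Fin.forall_fin_succ, Fin.sum_univ_succ, Fin.cons_zero,
    Fin.cons_succ, le_sub_iff_add_le']
  tauto

lemma lintegral_fin_cons (f : (Fin (n + 1) → ℝ) → ENNReal) (hf : Measurable f) :
    ∫⁻ x, f x = ∫⁻ y, ∫⁻ p : Fin n → ℝ, f (Fin.cons y p) := by
  have he := (volume_preserving_piFinSuccAbove (fun _ : Fin (n + 1) => ℝ) 0).symm
  rw [← he.lintegral_comp hf, Measure.volume_eq_prod, lintegral_prod]
  · simp [MeasurableEquiv.piFinSuccAbove_symm_apply]; rfl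
  · exact (hf.comp he.measurable).aemeasurable

lemma measurable_prod_rpow (a : Fin n → ℝ) :
    Measurable fun s : Fin n → ℝ => ∏ j, ENNReal.ofReal (s j ^ (a j - 1)) := by
  fun_prop

lemma setLIntegral_cornerSimplex_succ (a : Fin (n + 1) → ℝ) (u : ℝ) :
    ∫⁻ s in cornerSimplex (n + 1) u, ∏ j, ENNReal.ofReal (s j ^ (a j - 1)) =
      ∫⁻ y in Ioi 0, ENNReal.ofReal (y ^ (a 0 - 1)) *
        ∫⁻ p in cornerSimplex n (u - y), ∏ j, ENNReal.ofReal (p j ^ (a j.succ - 1)) := by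
  classical
  have hcons : ∀ y p, (cornerSimplex (n + 1) u).indicator
      (fun s => ∏ j, ENNReal.ofReal (s j ^ (a j - 1))) (Fin.cons y p) =
      (Ioi 0).indicator (fun y => ENNReal.ofReal (y ^ (a 0 - 1))) y *
        (cornerSimplex n (u - y)).indicator
          (fun p => ∏ j, ENNReal.ofReal (p j ^ (a j.succ - 1))) p := by
    intro y p
    rw [indicator_apply, cons_mem_cornerSimplex_iff]
    by_cases hy : 0 < y <;> by_cases hp : p ∈ cornerSimplex n (u - y) <;>
      simp [hy, hp, Fin.prod_univ_succ]
  rw [← lintegral_indicator (measurableSet_cornerSimplex _),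
    lintegral_fin_cons _ ((measurable_prod_rpow _).indicator (measurableSet_cornerSimplex _)),
    ← lintegral_indicator measurableSet_Ioi]
  refine lintegral_congr fun y => ?_
  simp_rw [hcons]
  rw [indicator_mul_left]
  rw [lintegral_const_mul _ ((measurable_prod_rpow _).indicator (measurableSet_cornerSimplex _)),
    lintegral_indicator (measurableSet_cornerSimplex _)]

theorem lintegral_cornerSimplex_prod_rpow (a : Fin n → ℝ) (ha : ∀ j, 0 < a j) {u : ℝ}
    (hu : 0 ≤ u) :
    ∫⁻ s in cornerSimplex n u, ∏ j, ENNReal.ofReal (s j ^ (a j - 1)) =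
      ENNReal.ofReal ((∏ j, Gamma (a j)) / Gamma (∑ j, a j + 1) * u ^ ∑ j, a j) := by
  induction n generalizing u with
  | zero => simp [cornerSimplex, hu, volume_pi]
  | succ n ih =>
    set A := ∑ j, a (Fin.succ j)
    set C := (∏ j, Gamma (a (Fin.succ j))) / Gamma (A + 1)
    have hA : 0 ≤ A := Finset.sum_nonneg fun j _ => (ha _).le
    have hC : 0 ≤ C := div_nonneg (Finset.prod_nonneg fun j _ => (Gamma_pos_of_pos (ha _)).le)
      (Gamma_pos_of_pos (by linarith)).le
    have hstep : ∀ y ∈ Ioi 0, ENNReal.ofReal (y ^ (a 0 - 1)) *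
        ∫⁻ p in cornerSimplex n (u - y), ∏ j, ENNReal.ofReal (p j ^ (a j.succ - 1)) =
        (Iic u).indicator
          (fun y => ENNReal.ofReal C * ENNReal.ofReal (y ^ (a 0 - 1) * (u - y) ^ (A + 1 - 1)))
          y := by
      intro y hy
      by_cases hyu : y ≤ u
      · rw [indicator_of_mem (mem_Iic.2 hyu), ih _ (fun j => ha _) (sub_nonneg.2 hyu),
          ← ENNReal.ofReal_mul (rpow_nonneg (le_of_lt hy) _), ← ENNReal.ofReal_mul hC,
          add_sub_cancel_right, mul_left_comm]
      · rw [indicator_of_notMem (mt mem_Iic.1 hyu), cornerSimplex_eq_empty (by linarith),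
          Measure.restrict_empty, lintegral_zero_measure, mul_zero]
    rw [setLIntegral_cornerSimplex_succ, setLIntegral_congr_fun measurableSet_Ioi hstep,
      setLIntegral_indicator measurableSet_Iic, Iic_inter_Ioi, Fin.sum_univ_succ,
      Fin.prod_univ_succ]
    rcases hu.eq_or_lt with rfl | hu
    · have hsum : 0 < a 0 + ∑ j : Fin n, a j.succ := add_pos_of_pos_of_nonneg (ha 0) hA
      simp [zero_rpow hsum.ne']
    rw [setLIntegral_congr Ioo_ae_eq_Ioc.symm, lintegral_const_mul' _ _ ENNReal.ofReal_ne_top,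
      lintegral_Ioo_rpow_mul_rpow (ha 0) (by linarith) hu, ← ENNReal.ofReal_mul hC, beta]
    have hΓ : Gamma (A + 1) ≠ 0 := (Gamma_pos_of_pos (by linarith)).ne'
    congr 1
    rw [show a 0 + (A + 1) - 1 = a 0 + A by ring, show a 0 + (A + 1) = a 0 + A + 1 by ring]
    simp only [C, A] at hΓ ⊢
    field_simp

end CornerSimplex

lemma heatK_sq {s : ℝ} (hs : 0 < s) (y : ℝ) :
    heatK s y ^ 2 = (2 * √(π * s))⁻¹ * gaussianPDFReal 0 (s.toNNReal / 2) y := by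
  have hπs : 0 < π * s := by positivity
  have hconst : (2 * √(π * s))⁻¹ * (√(π * s))⁻¹ = (2 * π * s)⁻¹ := by
    rw [← mul_inv, mul_assoc, mul_self_sqrt hπs.le, mul_assoc]
  have hexp : ((2 : ℕ) : ℝ) * (-(y ^ 2) / (2 * s)) = -(y - 0) ^ 2 / (2 * (s / 2)) := by
    field_simp
    push_cast
    ring
  rw [gaussianPDFReal, heatK, div_pow, sq_sqrt (by positivity), ← exp_nat_mul, hexp]
  simp only [NNReal.coe_div, coe_toNNReal _ hs.le, NNReal.coe_ofNat]
  rw [show 2 * π * (s / 2) = π * s by ring, ← mul_assoc, hconst, div_eq_inv_mul]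

lemma integrable_heatK_sq {s : ℝ} (hs : 0 < s) : Integrable fun y => heatK s y ^ 2 := by
  simp_rw [heatK_sq hs]
  exact (integrable_gaussianPDFReal _ _).const_mul _

lemma integral_heatK_sq {s : ℝ} (hs : 0 < s) : ∫ y, heatK s y ^ 2 = (2 * √(π * s))⁻¹ := by
  simp_rw [heatK_sq hs]
  rw [integral_const_mul, integral_gaussianPDFReal_eq_one _ (by simpa using hs), mul_one]

lemma lintegral_prod_heatK_sq_increments {n : ℕ} {s : Fin n → ℝ} (hs : ∀ j, 0 < s j) :
    ∫⁻ x, ENNReal.ofReal (∏ j, heatK (s j) (increments n x j) ^ 2) =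
      ENNReal.ofReal (∏ j, (2 * √(π * s j))⁻¹) := by
  have hmeas : Measurable fun y : Fin n → ℝ => ENNReal.ofReal (∏ j, heatK (s j) (y j) ^ 2) := by
    unfold heatK; fun_prop
  rw [measurePreserving_increments.lintegral_comp hmeas, volume_pi,
    ← ofReal_integral_eq_lintegral_ofReal
      (Integrable.fintype_prod fun j => integrable_heatK_sq (hs j))
      (ae_of_all _ fun y => Finset.prod_nonneg fun j _ => sq_nonneg _),
    integral_fintype_prod_eq_prod (fun j y => heatK (s j) y ^ 2)]
  simp_rw [integral_heatK_sq (hs _)]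

section RhoN

variable {n : ℕ}

lemma indi_simplex_eq_indicator (t : Fin n → ℝ) :
    indi ((∀ j, 0 < t j ∧ t j ≤ 1) ∧ StrictMono t) =
      (cornerSimplex n 1).indicator (fun _ => (1 : ℝ)) (increments n t) := by
  classical
  simp only [indi, indicator_apply, simplex_iff_increments_mem_cornerSimplex]

lemma rhoN_eq_increments (q : (Fin n → ℝ) × (Fin n → ℝ)) :
    rhoN n q = (cornerSimplex n 1).indicator (fun _ => (1 : ℝ)) (increments n q.1) *
      ∏ j, heatK (increments n q.1 j) (increments n q.2 j) := by
  rw [rhoN, indi_simplex_eq_indicator]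
  rfl

lemma measurable_rhoN : Measurable (rhoN n) := by
  simp_rw [funext rhoN_eq_increments]
  have hind : Measurable ((cornerSimplex n 1).indicator fun _ => (1 : ℝ)) :=
    measurable_const.indicator (measurableSet_cornerSimplex 1)
  have hinc : Measurable (increments n) := measurePreserving_increments.measurable
  unfold heatK
  fun_prop

lemma lintegral_rhoN_sq_slice (t : Fin n → ℝ) :
    ∫⁻ x, ENNReal.ofReal (rhoN n (t, x) ^ 2) =
      ENNReal.ofReal (2 * √π)⁻¹ ^ n * (cornerSimplex n 1).indicator
        (fun s => ∏ j, ENNReal.ofReal (s j ^ ((1 / 2 : ℝ) - 1))) (increments n t) := by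
  by_cases ht : increments n t ∈ cornerSimplex n 1
  · simp only [rhoN_eq_increments, indicator_of_mem ht, one_mul, ← Finset.prod_pow]
    have hfactor : ∀ j, (2 * √(π * increments n t j))⁻¹ =
        (2 * √π)⁻¹ * increments n t j ^ ((1 / 2 : ℝ) - 1) := by
      intro j
      rw [sqrt_mul pi_pos.le, sqrt_eq_rpow (increments n t j),
        show (1 / 2 : ℝ) - 1 = -(1 / 2) by norm_num,
        rpow_neg (ht.1 j).le]
      ring
    rw [lintegral_prod_heatK_sq_increments ht.1, ENNReal.ofReal_prod_of_nonneg
      (fun j _ => by positivity)]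
    simp_rw [hfactor, ENNReal.ofReal_mul (by positivity : (0 : ℝ) ≤ (2 * √π)⁻¹),
      Finset.prod_mul_distrib, Finset.prod_const, Finset.card_univ, Fintype.card_fin]
  · simp [rhoN_eq_increments, indicator_of_notMem ht]

lemma rhoN_eq_zero_of_notMem {q : (Fin n → ℝ) × (Fin n → ℝ)}
    (hq : q ∉ (univ.pi fun _ => Icc (0 : ℝ) 1) ×ˢ univ) : rhoN n q = 0 := by
  rw [rhoN, indi, if_neg, zero_mul]
  rintro ⟨hbound, -⟩
  exact hq ⟨fun j _ => ⟨(hbound j).1.le, (hbound j).2⟩, mem_univ _⟩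

lemma lintegral_rhoN_sq :
    ∫⁻ q, ENNReal.ofReal (rhoN n q ^ 2) =
      ENNReal.ofReal (2 * √π)⁻¹ ^ n * ENNReal.ofReal (√π ^ n / Gamma (n / 2 + 1)) := by
  have hmeas : Measurable fun q => ENNReal.ofReal (rhoN n q ^ 2) := by
    have := measurable_rhoN (n := n)
    fun_prop
  have hdens : Measurable ((cornerSimplex n 1).indicator
      fun s => ∏ j, ENNReal.ofReal (s j ^ ((1 / 2 : ℝ) - 1))) :=
    (measurable_prod_rpow _).indicator (measurableSet_cornerSimplex 1)
  rw [Measure.volume_eq_prod, lintegral_prod _ hmeas.aemeasurable]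
  simp_rw [lintegral_rhoN_sq_slice]
  rw [lintegral_const_mul' _ _ (ENNReal.pow_ne_top ENNReal.ofReal_ne_top),
    measurePreserving_increments.lintegral_comp hdens,
    lintegral_indicator (measurableSet_cornerSimplex 1),
    lintegral_cornerSimplex_prod_rpow (fun _ => 1 / 2) (fun _ => by norm_num) zero_le_one]
  simp only [Finset.prod_const, Finset.sum_const, Finset.card_univ, Fintype.card_fin, one_rpow,
    mul_one, nsmul_eq_mul, Gamma_one_half_eq, mul_one_div]

end RhoN

theorem statement6_general (n : ℕ) :
    ∫ q in ((Set.univ.pi fun _ : Fin n => Set.Icc (0 : ℝ) 1) ×ˢ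
        (Set.univ : Set (Fin n → ℝ))), (rhoN n q) ^ 2
      = 1 / (2 ^ n * Real.Gamma ((n : ℝ) / 2 + 1)) := by
  rw [setIntegral_eq_integral_of_forall_compl_eq_zero fun q hq => by
      rw [rhoN_eq_zero_of_notMem hq, zero_pow two_ne_zero],
    integral_eq_lintegral_of_nonneg_ae (ae_of_all _ fun q => sq_nonneg _)
      (measurable_rhoN.pow_const 2).aestronglyMeasurable,
    lintegral_rhoN_sq, ← ENNReal.ofReal_pow (by positivity), ← ENNReal.ofReal_mul (by positivity),
    ENNReal.toReal_ofReal (by positivity), div_eq_mul_inv, ← mul_assoc, ← mul_pow, mul_inv,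
    inv_mul_cancel_right₀ (sqrt_pos.2 pi_pos).ne', inv_pow, one_div, mul_inv]

/-- For every `n ≥ 1`,
`∫_{[0,1]^n} ∫_{ℝ^n} ϱ_n(t,x)² dx dt = 1 / (2^n Γ(n/2 + 1))`. -/
theorem statement6 (n : ℕ) (hn : 1 ≤ n) :
    ∫ q in ((Set.univ.pi fun _ : Fin n => Set.Icc (0 : ℝ) 1) ×ˢ
        (Set.univ : Set (Fin n → ℝ))), (rhoN n q) ^ 2
      = 1 / (2 ^ n * Real.Gamma ((n : ℝ) / 2 + 1)) :=
  statement6_general n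
end

section
/- Let (U_n) and (V_n) be sequences of positive random variables with 0 ≤ U_n ≤ V_n for all n, and suppose (V_n) is uniformly integrable. If V_n / U_n converges in distribution to 1 and lim_{n→∞} E[V_n] = C, then lim_{n→∞} E[U_n] = C. -/
/-!
On the event where `V n / U n` is within `ε < 1` of `1` we have `V n - U n ≤ ε V n`, so
`E[V n] - E[U n] ≤ ε E[V n] + E[V n; |V n / U n - 1| ≥ ε]`. Convergence in distribution to
the constant `1` is convergence in probability, so the exceptional events have vanishing
probability, and uniform integrability of `(V n)` makes the last term vanish as well.
-/

open MeasureTheory ProbabilityTheory Filter Topology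

section

variable {Ω E ι : Type*} [MeasurableSpace Ω] {μ : Measure Ω} {l : Filter ι}

theorem tendstoInMeasure_const_of_tendsto_integral_bcf [IsFiniteMeasure μ]
    [PseudoMetricSpace E] [MeasurableSpace E] [OpensMeasurableSpace E]
    {X : ι → Ω → E} {c : E} (hX : ∀ i, AEMeasurable (X i) μ)
    (h : ∀ f : BoundedContinuousFunction E ℝ,
      Tendsto (fun i => ∫ a, f (X i a) ∂μ) l (𝓝 (f c))) :
    TendstoInMeasure μ X l (fun _ => c) := by
  refine tendstoInMeasure_iff_measureReal_dist.2 fun ε hε => ?_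
  let φ : BoundedContinuousFunction E ℝ :=
    .ofNormedAddCommGroup (fun x => min (dist x c / ε) 1) (by fun_prop) 1 fun x => by
      rw [Real.norm_of_nonneg (by positivity)]; exact min_le_right _ _
  have hφc : φ c = 0 := by simp [φ]
  have hφ_nonneg : ∀ x, 0 ≤ φ x := fun x => le_min (by positivity) zero_le_one
  refine squeeze_zero (fun _ => measureReal_nonneg) (fun i => ?_) (hφc ▸ h φ)
  calc μ.real {a | ε ≤ dist (X i a) c} ≤ μ.real {a | 1 ≤ φ (X i a)} := by
        refine measureReal_mono fun a ha => ?_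
        simpa [φ, one_le_div hε] using ha
    _ ≤ ∫ a, φ (X i a) ∂μ := by
        have hφX : Integrable (fun a => φ (X i a)) μ :=
          .of_bound (φ.continuous.measurable.comp_aemeasurable (hX i)).aestronglyMeasurable ‖φ‖
            (ae_of_all _ fun a => φ.norm_coe_le_norm _)
        simpa using mul_meas_ge_le_integral_of_nonneg (ae_of_all _ fun a => hφ_nonneg _) hφX 1

theorem MeasureTheory.UnifIntegrable.tendsto_setIntegral_zero {f : ι → Ω → ℝ}
    (hf : UnifIntegrable f 1 μ) {s : ι → Set Ω} (hs : ∀ i, MeasurableSet (s i))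
    (hμs : Tendsto (fun i => μ (s i)) l (𝓝 0)) :
    Tendsto (fun i => ∫ a in s i, f i a ∂μ) l (𝓝 0) := by
  refine Metric.tendsto_nhds.2 fun η hη => ?_
  obtain ⟨δ, hδ, hsmall⟩ := hf (half_pos hη)
  filter_upwards [ENNReal.tendsto_nhds_zero.1 hμs _ (ENNReal.ofReal_pos.2 hδ)] with i hi
  rw [dist_zero_right, ← integral_indicator (hs i)]
  calc ‖∫ a, (s i).indicator (f i) a ∂μ‖
      ≤ (eLpNorm ((s i).indicator (f i)) 1 μ).toReal := by
        rw [eLpNorm_one_eq_lintegral_enorm]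
        simpa only [ofReal_norm] using
          norm_integral_le_lintegral_norm (μ := μ) ((s i).indicator (f i))
    _ ≤ η / 2 := ENNReal.toReal_le_of_le_ofReal (half_pos hη).le (hsmall i (s i) (hs i) hi)
    _ < η := half_lt_self hη

theorem sub_le_mul_of_abs_div_sub_one_lt {u v ε : ℝ} (hu : 0 ≤ u) (huv : u ≤ v) (hε : ε < 1)
    (h : |v / u - 1| < ε) : v - u ≤ ε * v := by
  have hu_pos : 0 < u := hu.lt_of_ne <| by
    rintro rfl
    norm_num at h
    linarith
  have : v < (1 + ε) * u := by
    rw [← div_lt_iff₀ hu_pos]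
    linarith [(abs_lt.1 h).2]
  nlinarith

theorem integral_sub_le_mul_add_setIntegral {U V : Ω → ℝ} {s : Set Ω} {ε : ℝ}
    (hU : Integrable U μ) (hV : Integrable V μ) (hs : MeasurableSet s) (hε : 0 ≤ ε)
    (hU_nonneg : ∀ a, 0 ≤ U a) (hV_nonneg : ∀ a, 0 ≤ V a)
    (h : ∀ a ∉ s, V a - U a ≤ ε * V a) :
    ∫ a, V a ∂μ - ∫ a, U a ∂μ ≤ ε * ∫ a, V a ∂μ + ∫ a in s, V a ∂μ := by
  rw [← integral_sub hV hU, ← integral_const_mul, ← integral_indicator hs,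
    ← integral_add (hV.const_mul ε) (hV.indicator hs)]
  refine integral_mono (hV.sub hU) ((hV.const_mul ε).add (hV.indicator hs)) fun a => ?_
  by_cases ha : a ∈ s
  · simp only [Set.indicator_of_mem ha]
    nlinarith [hU_nonneg a, hV_nonneg a]
  · simpa [Set.indicator_of_notMem ha] using h a ha

theorem tendsto_zero_of_forall_le_mul_add {D W : ι → ℝ} {C : ℝ} (hD : ∀ i, 0 ≤ D i)
    (hW : Tendsto W l (𝓝 C))
    (h : ∀ ε, 0 < ε → ε < 1 → ∃ r : ι → ℝ, Tendsto r l (𝓝 0) ∧ ∀ i, D i ≤ ε * W i + r i) :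
    Tendsto D l (𝓝 0) := by
  refine tendsto_order.2 ⟨fun a ha => .of_forall fun i => ha.trans_le (hD i), fun η hη => ?_⟩
  set ε := min (1 / 2) (η / (2 * (|C| + 1)))
  have hε : 0 < ε := by positivity
  obtain ⟨r, hr, hD_le⟩ := h ε hε ((min_le_left _ _).trans_lt (by norm_num))
  have hεC : ε * C < η := calc
    ε * C ≤ ε * (|C| + 1) := mul_le_mul_of_nonneg_left (by linarith [le_abs_self C]) hε.le
    _ ≤ η / (2 * (|C| + 1)) * (|C| + 1) :=
      mul_le_mul_of_nonneg_right (min_le_right _ _) (by positivity)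
    _ = η / 2 := by field_simp
    _ < η := half_lt_self hη
  have hbound := (hW.const_mul ε).add hr
  rw [add_zero] at hbound
  filter_upwards [hbound.eventually (gt_mem_nhds hεC)] with i hi
  exact (hD_le i).trans_lt hi

end

/-- If `0 ≤ U_n ≤ V_n`, `(V_n)` is uniformly integrable,
`V_n / U_n → 1` in distribution and `E[V_n] → C`, then `E[U_n] → C`. -/
theorem statement13
    {Ω : Type*} [MeasurableSpace Ω] (P : Measure Ω) [IsProbabilityMeasure P]
    (U V : ℕ → Ω → ℝ) (hUmeas : ∀ n, Measurable (U n)) (hVmeas : ∀ n, Measurable (V n))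
    (hUpos : ∀ n a, 0 ≤ U n a) (hle : ∀ n a, U n a ≤ V n a)
    (hUI : UniformIntegrable V 1 P)
    (hratio : ∀ f : BoundedContinuousFunction ℝ ℝ,
      Tendsto (fun n : ℕ => ∫ a, f (V n a / U n a) ∂P) atTop (𝓝 (f 1)))
    (C : ℝ) (hEV : Tendsto (fun n : ℕ => ∫ a, V n a ∂P) atTop (𝓝 C)) :
    Tendsto (fun n : ℕ => ∫ a, U n a ∂P) atTop (𝓝 C) := by
  have hV_int n : Integrable (V n) P := (hUI.memLp n).integrable le_rfl
  have hU_int n : Integrable (U n) P :=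
    (hV_int n).mono' (hUmeas n).aestronglyMeasurable <| .of_forall fun a => by
      rw [Real.norm_of_nonneg (hUpos n a)]; exact hle n a
  have hratio_meas : TendstoInMeasure P (fun n a => V n a / U n a) atTop (fun _ => 1) :=
    tendstoInMeasure_const_of_tendsto_integral_bcf
      (fun n => ((hVmeas n).div (hUmeas n)).aemeasurable) hratio
  have hfar_meas (ε : ℝ) n : MeasurableSet {a | ε ≤ dist (V n a / U n a) 1} :=
    measurableSet_le measurable_const (((hVmeas n).div (hUmeas n)).dist measurable_const)
  have hgap : Tendsto (fun n => ∫ a, V n a ∂P - ∫ a, U n a ∂P) atTop (𝓝 0) := by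
    refine tendsto_zero_of_forall_le_mul_add
      (fun n => sub_nonneg.2 (integral_mono (hU_int n) (hV_int n) (hle n))) hEV
      fun ε hε hε1 => ⟨_, hUI.unifIntegrable.tendsto_setIntegral_zero (hfar_meas ε)
        (tendstoInMeasure_iff_dist.1 hratio_meas ε hε), fun n => ?_⟩
    exact integral_sub_le_mul_add_setIntegral (hU_int n) (hV_int n) (hfar_meas ε n) hε.le
      (hUpos n) (fun a => (hUpos n a).trans (hle n a)) fun a ha =>
        sub_le_mul_of_abs_div_sub_one_lt (hUpos n a) (hle n a) hε1 (not_le.1 ha)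
  simpa using hEV.sub hgap
end

section
/- Let S be a simple symmetric random walk on ℤ started at 0, T_1 := inf{n ≥ 1 : S_n = 0} its first return time to 0, and for N ∈ ℕ and β > 0 set λ_N(β) := −log E[exp(−β · min(T_1, N))]. Suppose C > 0 is a constant such that P(T_1 = 2k) ≥ C k^{−3/2} for all k ≥ 1. Then for every β > 0, liminf_{N→∞} √N · λ_N(β/N) ≥ C ∫_0^{1/2} t^{−3/2} (1 − e^{−2tβ}) dt, and this integral is finite and strictly positive. -/
open MeasureTheory ProbabilityTheory Filter Topology

/-!
Since `-log x ≥ 1 - x`, `λ_N(β/N) ≥ E[1 - e^{-(β/N) min(T₁, N)}]`, and keeping only the events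
`T₁ = 2k ≤ N` this is at least `∑_{k ≤ N/2} P(T₁ = 2k) (1 - e^{-2kβ/N})`. The lower bound on
`P(T₁ = 2k)` turns `√N` times this sum into `C` times the Riemann sum `(1/N) ∑_{k ≤ N/2} f(k/N)`
of `f(t) = t^{-3/2} (1 - e^{-2tβ})`. As `f` is decreasing, that Riemann sum dominates
`∫_{1/N}^{1/2} f`, and the missing piece `∫_0^{1/N} f` is at most `4β/√N` because
`f(t) ≤ 2β t^{-1/2}`.
-/

open Set Real

theorem measurable_nat_sInf {Ω : Type*} [MeasurableSpace Ω] {p : ℕ → Ω → Prop}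
    (hp : ∀ n, MeasurableSet {a | p n a}) : Measurable fun a => sInf {n | p n a} := by
  classical
  have hex : MeasurableSet {a | ∃ n, p n a} := by
    simpa only [ofPred_exists] using MeasurableSet.iUnion hp
  -- `sInf ∅ = 0` is matched by letting the search stop at `0` when no index qualifies
  have hstop (a : Ω) : ∃ n, p n a ∨ ¬ ∃ m, p m a := by
    by_cases h : ∃ m, p m a
    · exact h.imp fun _ => Or.inl
    · exact ⟨0, Or.inr h⟩
  convert measurable_find hstop fun n => (hp n).union hex.compl using 1
  funext a
  by_cases h : ∃ m, p m a
  · rw [Nat.sInf_def (s := {n | p n a}) h]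
    exact Nat.find_congr' (by simp [h])
  · have hempty : {n | p n a} = ∅ := eq_empty_iff_forall_notMem.2 fun n hn => h ⟨n, hn⟩
    rw [hempty, Nat.sInf_empty, eq_comm, Nat.find_eq_zero]
    exact Or.inr h

theorem antitoneOn_one_sub_exp_neg_mul_div (c : ℝ) :
    AntitoneOn (fun t => (1 - exp (-c * t)) / t) (Ioi 0) := by
  intro s hs t ht hst
  have h := (convexOn_exp.comp_linearMap (LinearMap.mul ℝ ℝ (-c))).secant_mono
    (a := 0) (x := s) (y := t) trivial trivial trivial (ne_of_gt hs) (ne_of_gt ht) hst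
  simp only [Function.comp_apply, LinearMap.mul_apply', mul_zero, exp_zero, sub_zero] at h
  simp only [← neg_sub (exp _) 1, neg_div]
  exact neg_le_neg h

noncomputable def returnWeight (β t : ℝ) : ℝ := t ^ (-(3 / 2 : ℝ)) * (1 - exp (-2 * t * β))

section returnWeight

variable {β : ℝ}

theorem one_sub_exp_neg_two_mul_mul_nonneg (hβ : 0 ≤ β) {t : ℝ} (ht : 0 ≤ t) :
    0 ≤ 1 - exp (-2 * t * β) :=
  sub_nonneg.2 (exp_le_one_iff.2 (by nlinarith))

theorem returnWeight_nonneg (hβ : 0 ≤ β) {t : ℝ} (ht : 0 ≤ t) : 0 ≤ returnWeight β t :=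
  mul_nonneg (rpow_nonneg ht _) (one_sub_exp_neg_two_mul_mul_nonneg hβ ht)

theorem returnWeight_pos (hβ : 0 < β) {t : ℝ} (ht : 0 < t) : 0 < returnWeight β t :=
  mul_pos (rpow_pos_of_pos ht _) (sub_pos.2 (exp_lt_one_iff.2 (by nlinarith)))

theorem returnWeight_eq_rpow_mul_div {t : ℝ} (ht : 0 < t) :
    returnWeight β t = t ^ (-(1 / 2 : ℝ)) * ((1 - exp (-(2 * β) * t)) / t) := by
  have h : t ^ (-(3 / 2 : ℝ)) = t ^ (-(1 / 2 : ℝ)) * t⁻¹ := by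
    rw [← rpow_neg_one, ← rpow_add ht]; norm_num
  rw [returnWeight, h, show -(2 * β) * t = -2 * t * β by ring]
  ring

theorem returnWeight_le {t : ℝ} (ht : 0 < t) :
    returnWeight β t ≤ 2 * β * t ^ (-(1 / 2 : ℝ)) := by
  have h := add_one_le_exp (-(2 * β) * t)
  rw [returnWeight_eq_rpow_mul_div ht, mul_comm (2 * β)]
  gcongr
  rw [div_le_iff₀ ht]; linarith

theorem antitoneOn_returnWeight (hβ : 0 ≤ β) : AntitoneOn (returnWeight β) (Ioi 0) := by
  intro s hs t ht hst
  rw [returnWeight_eq_rpow_mul_div hs, returnWeight_eq_rpow_mul_div ht]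
  refine mul_le_mul (rpow_le_rpow_of_nonpos hs hst (by norm_num))
    (antitoneOn_one_sub_exp_neg_mul_div _ hs ht hst) ?_ (rpow_nonneg hs.le _)
  rw [show -(2 * β) * t = -2 * t * β by ring]
  exact div_nonneg (one_sub_exp_neg_two_mul_mul_nonneg hβ ht.le) ht.le

theorem integrableOn_returnWeight (hβ : 0 ≤ β) (x : ℝ) :
    IntegrableOn (returnWeight β) (Ioc 0 x) := by
  have hdom : IntegrableOn (fun t : ℝ => t ^ (-(1 / 2 : ℝ))) (Ioc 0 x) := by
    rcases le_total x 0 with hx | hx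
    · simp [Ioc_eq_empty_of_le hx]
    · exact (intervalIntegrable_iff_integrableOn_Ioc_of_le hx).1
        (intervalIntegral.intervalIntegrable_rpow' (by norm_num))
  refine (hdom.const_mul (2 * β)).mono' (by unfold returnWeight; fun_prop) ?_
  filter_upwards [ae_restrict_mem measurableSet_Ioc] with t ht
  rw [norm_of_nonneg (returnWeight_nonneg hβ ht.1.le)]
  exact returnWeight_le ht.1

theorem intervalIntegrable_returnWeight (hβ : 0 ≤ β) {a b : ℝ} (ha : 0 ≤ a) (hb : 0 ≤ b) :
    IntervalIntegrable (returnWeight β) volume a b :=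
  have h0 {x : ℝ} (hx : 0 ≤ x) : IntervalIntegrable (returnWeight β) volume 0 x :=
    (intervalIntegrable_iff_integrableOn_Ioc_of_le hx).2 (integrableOn_returnWeight hβ x)
  (h0 ha).symm.trans (h0 hb)

theorem integral_returnWeight_le (hβ : 0 ≤ β) {x : ℝ} (hx : 0 ≤ x) :
    ∫ t in (0)..x, returnWeight β t ≤ 4 * β * √x := by
  calc ∫ t in (0)..x, returnWeight β t ≤ ∫ t in (0)..x, 2 * β * t ^ (-(1 / 2 : ℝ)) := by
        refine intervalIntegral.integral_mono_on_of_le_Ioo hx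
          (intervalIntegrable_returnWeight hβ le_rfl hx)
          ((intervalIntegral.intervalIntegrable_rpow' (by norm_num)).const_mul _) ?_
        exact fun t ht => returnWeight_le ht.1
    _ = 4 * β * √x := by
        rw [intervalIntegral.integral_const_mul, integral_rpow (by norm_num),
          zero_rpow (by norm_num), sqrt_eq_rpow]
        norm_num
        ring

theorem AntitoneOn.integral_le_sum_div {f : ℝ → ℝ} (hf : AntitoneOn f (Ioi 0)) {N : ℕ}
    (hN : 0 < N) (M : ℕ) :
    ∫ t in (1 / N : ℝ)..((M + 1) / N), f t ≤ ∑ k ∈ Finset.Icc 1 M, f (k / N) / N := by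
  have hNR : (0 : ℝ) < N := by exact_mod_cast hN
  have hscaled : AntitoneOn (fun x => f (x / N)) (Icc 1 (1 + M)) := fun x hx y hy hxy =>
    hf (div_pos (by linarith [hx.1]) hNR) (div_pos (by linarith [hy.1]) hNR)
      (div_le_div_of_nonneg_right hxy hNR.le)
  have h := hscaled.integral_le_sum
  rw [intervalIntegral.integral_comp_div _ hNR.ne', smul_eq_mul, ← le_div_iff₀' hNR,
    Finset.sum_div, add_comm 1 (M : ℝ)] at h
  rw [← Finset.Ico_add_one_right_eq_Icc, Finset.sum_Ico_eq_sum_range, Nat.add_sub_cancel]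
  simpa only [Nat.cast_add, Nat.cast_one] using h

theorem setIntegral_returnWeight_sub_le_sum (hβ : 0 ≤ β) {N : ℕ} (hN : 0 < N) :
    (∫ t in Ioc 0 (1 / 2), returnWeight β t) - 4 * β / √N ≤
      ∑ k ∈ Finset.Icc 1 (N / 2), returnWeight β (k / N) / N := by
  have hNR : (0 : ℝ) < N := by exact_mod_cast hN
  set b : ℝ := ((N / 2 : ℕ) + 1) / N
  have hhalf : 1 / 2 ≤ b := by
    rw [le_div_iff₀ hNR]
    have : (N : ℝ) ≤ 2 * ((N / 2 : ℕ) + 1) := by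
      exact_mod_cast (by omega : N ≤ 2 * (N / 2 + 1))
    linarith
  have hfirst : 1 / (N : ℝ) ≤ b := div_le_div_of_nonneg_right (by linarith) hNR.le
  have hb : 0 ≤ b := by positivity
  rw [sub_le_iff_le_add', div_eq_mul_inv (4 * β), ← sqrt_inv, ← one_div]
  calc ∫ t in Ioc 0 (1 / 2), returnWeight β t
      ≤ ∫ t in (0)..b, returnWeight β t := by
        rw [intervalIntegral.integral_of_le hb]
        refine setIntegral_mono_set (integrableOn_returnWeight hβ b) ?_
          (Ioc_subset_Ioc_right hhalf).eventuallyLE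
        filter_upwards [ae_restrict_mem measurableSet_Ioc] with t ht
        exact returnWeight_nonneg hβ ht.1.le
    _ = (∫ t in (0)..(1 / N), returnWeight β t) + ∫ t in (1 / N)..b, returnWeight β t :=
        (intervalIntegral.integral_add_adjacent_intervals
          (intervalIntegrable_returnWeight hβ le_rfl (by positivity))
          (intervalIntegrable_returnWeight hβ (by positivity) hb)).symm
    _ ≤ 4 * β * √(1 / N) + ∑ k ∈ Finset.Icc 1 (N / 2), returnWeight β (k / N) / N :=
        add_le_add (integral_returnWeight_le hβ (by positivity))
          ((antitoneOn_returnWeight hβ).integral_le_sum_div hN _)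

theorem setIntegral_returnWeight_pos (hβ : 0 < β) {x : ℝ} (hx : 0 < x) :
    0 < ∫ t in Ioc 0 x, returnWeight β t := by
  rw [← intervalIntegral.integral_of_le hx.le]
  exact intervalIntegral.intervalIntegral_pos_of_pos_on
    (intervalIntegrable_returnWeight hβ.le le_rfl hx.le) (fun t ht => returnWeight_pos hβ ht.1) hx

end returnWeight

theorem exp_neg_mul_le_one {c x : ℝ} (hc : 0 ≤ c) (hx : 0 ≤ x) : exp (-c * x) ≤ 1 :=
  exp_le_one_iff.2 (mul_nonpos_of_nonpos_of_nonneg (neg_nonpos.2 hc) hx)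

section returnTime

variable {Ω : Type*} [MeasurableSpace Ω] {P : Measure Ω} {T : Ω → ℕ}

theorem sum_measureReal_mul_le_integral [IsFiniteMeasure P] (hT : Measurable T) {φ : ℕ → ℝ}
    (hφ : ∀ n, 0 ≤ φ n) (hint : Integrable (fun a => φ (T a)) P) (s : Finset ℕ) :
    ∑ n ∈ s, P.real {a | T a = n} * φ n ≤ ∫ a, φ (T a) ∂P := by
  classical
  have hmeas (n : ℕ) : MeasurableSet {a | T a = n} := hT (measurableSet_singleton n)
  have hind (n : ℕ) : Integrable ({a | T a = n}.indicator fun _ => φ n) P :=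
    (integrable_const (φ n)).indicator (hmeas n)
  calc ∑ n ∈ s, P.real {a | T a = n} * φ n
      = ∫ a, ∑ n ∈ s, {a | T a = n}.indicator (fun _ => φ n) a ∂P := by
        rw [integral_finsetSum _ fun n _ => hind n]
        refine Finset.sum_congr rfl fun n _ => ?_
        rw [integral_indicator_const _ (hmeas n), smul_eq_mul]
    _ ≤ ∫ a, φ (T a) ∂P := by
        refine integral_mono (integrable_finsetSum _ fun n _ => hind n) hint fun a => ?_
        simp only [indicator_apply, mem_ofPred_eq, Finset.sum_ite_eq]
        split_ifs
        exacts [le_rfl, hφ _]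

theorem integrable_exp_neg_mul_natCast [IsFiniteMeasure P] (hT : Measurable T) {c : ℝ}
    (hc : 0 ≤ c) : Integrable (fun a => exp (-c * T a)) P := by
  refine Integrable.of_bound (by fun_prop) 1 (ae_of_all _ fun a => ?_)
  rw [norm_of_nonneg (exp_nonneg _)]
  exact exp_neg_mul_le_one hc (Nat.cast_nonneg _)

theorem sum_measureReal_mul_one_sub_exp_le [IsProbabilityMeasure P] (hT : Measurable T) {c : ℝ}
    (hc : 0 ≤ c) (N : ℕ) :
    ∑ k ∈ Finset.Icc 1 (N / 2), P.real {a | T a = 2 * k} * (1 - exp (-c * (2 * k))) ≤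
      1 - ∫ a, exp (-c * (min (T a) N : ℕ)) ∂P := by
  have hmin : Measurable fun a => min (T a) N := hT.min measurable_const
  have h := sum_measureReal_mul_le_integral (P := P) hT
    (φ := fun n => 1 - exp (-c * (min n N : ℕ)))
    (fun n => sub_nonneg.2 (exp_neg_mul_le_one hc (Nat.cast_nonneg _)))
    ((integrable_const 1).sub (integrable_exp_neg_mul_natCast hmin hc))
    ((Finset.Icc 1 (N / 2)).image (2 * ·))
  rw [Finset.sum_image fun _ _ _ _ h => by omega, integral_sub (integrable_const 1)
    (integrable_exp_neg_mul_natCast hmin hc), integral_const, probReal_univ, one_smul] at h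
  refine (Finset.sum_congr rfl fun k hk => ?_).trans_le h
  rw [Finset.mem_Icc] at hk
  rw [min_eq_left (by omega)]
  push_cast
  ring

theorem sqrt_mul_rpow_mul_one_sub_exp_eq {β N k : ℝ} (hN : 0 < N) (hk : 0 < k) :
    √N * (k ^ (-(3 / 2 : ℝ)) * (1 - exp (-(β / N) * (2 * k)))) =
      returnWeight β (k / N) / N := by
  have hscale : (k / N) ^ (-(3 / 2 : ℝ)) = k ^ (-(3 / 2 : ℝ)) * (N * √N) := by
    rw [div_rpow hk.le hN.le, rpow_neg hN.le, div_inv_eq_mul, sqrt_eq_rpow, ← rpow_one_add' hN.le]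
    all_goals norm_num
  rw [returnWeight, hscale, show -2 * (k / N) * β = -(β / N) * (2 * k) by ring]
  field_simp

theorem mul_sub_le_sqrt_mul_neg_log_integral [IsProbabilityMeasure P] (hT : Measurable T) {C : ℝ}
    (hC : 0 ≤ C)
    (hlow : ∀ k : ℕ, 1 ≤ k → C * (k : ℝ) ^ (-(3 / 2 : ℝ)) ≤ P.real {a | T a = 2 * k})
    {β : ℝ} (hβ : 0 ≤ β) {N : ℕ} (hN : 0 < N) :
    C * ((∫ t in Ioc 0 (1 / 2), returnWeight β t) - 4 * β / √N) ≤
      √N * -log (∫ a, exp (-(β / N) * (min (T a) N : ℕ)) ∂P) := by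
  have hNR : (0 : ℝ) < N := by exact_mod_cast hN
  have hc : 0 ≤ β / N := by positivity
  have hE : 0 < ∫ a, exp (-(β / N) * (min (T a) N : ℕ)) ∂P :=
    integral_exp_pos (integrable_exp_neg_mul_natCast (hT.min measurable_const) hc)
  calc C * ((∫ t in Ioc 0 (1 / 2), returnWeight β t) - 4 * β / √N)
      ≤ C * ∑ k ∈ Finset.Icc 1 (N / 2), returnWeight β (k / N) / N :=
        mul_le_mul_of_nonneg_left (setIntegral_returnWeight_sub_le_sum hβ hN) hC
    _ = √N * ∑ k ∈ Finset.Icc 1 (N / 2),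
          C * (k : ℝ) ^ (-(3 / 2 : ℝ)) * (1 - exp (-(β / N) * (2 * k))) := by
        rw [Finset.mul_sum, Finset.mul_sum]
        refine Finset.sum_congr rfl fun k hk => ?_
        have hk : (0 : ℝ) < k := by exact_mod_cast (Finset.mem_Icc.1 hk).1
        rw [← sqrt_mul_rpow_mul_one_sub_exp_eq hNR hk]
        ring
    _ ≤ √N * ∑ k ∈ Finset.Icc 1 (N / 2),
          P.real {a | T a = 2 * k} * (1 - exp (-(β / N) * (2 * k))) := by
        gcongr with k hk
        · exact sub_nonneg.2 (exp_neg_mul_le_one hc (by positivity))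
        · exact hlow k (Finset.mem_Icc.1 hk).1
    _ ≤ √N * (1 - ∫ a, exp (-(β / N) * (min (T a) N : ℕ)) ∂P) := by
        gcongr
        exact sum_measureReal_mul_one_sub_exp_le hT hc N
    _ ≤ √N * -log (∫ a, exp (-(β / N) * (min (T a) N : ℕ)) ∂P) := by
        gcongr
        linarith [log_le_sub_one_of_pos hE]

end returnTime

/-- With `T₁` the first return time to `0` of a simple symmetric random
walk and `λ_N(β) = -log E[exp(-β min(T₁, N))]`, if `C > 0` satisfies
`P(T₁ = 2k) ≥ C k^{-3/2}` for all `k ≥ 1`, then for every `β > 0` the integral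
`∫_0^{1/2} t^{-3/2} (1 - e^{-2tβ}) dt` is finite and strictly positive and
`liminf_N √N λ_N(β/N) ≥ C ∫_0^{1/2} t^{-3/2} (1 - e^{-2tβ}) dt` (expressed below in
the ε-form of the liminf inequality). -/
theorem statement16
    {Ω : Type*} [MeasurableSpace Ω] (P : Measure Ω) [IsProbabilityMeasure P]
    (S : ℕ → Ω → ℤ) (hS : IsSSRW P S)
    (T : Ω → ℕ) (hT : ∀ a, T a = sInf {n : ℕ | 1 ≤ n ∧ S n a = 0})
    (lam : ℕ → ℝ → ℝ)
    (hlam : ∀ N β, lam N β = - Real.log (∫ a, Real.exp (-β * ((min (T a) N : ℕ) : ℝ)) ∂P))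
    (C : ℝ) (hC : 0 < C)
    (hlow : ∀ k : ℕ, 1 ≤ k →
      ENNReal.ofReal (C * (k : ℝ) ^ (-(3/2 : ℝ))) ≤ P {a | T a = 2 * k})
    (β : ℝ) (hβ : 0 < β) :
    IntegrableOn (fun t : ℝ => t ^ (-(3/2 : ℝ)) * (1 - Real.exp (-2 * t * β)))
        (Set.Ioc 0 (1/2)) volume
    ∧ 0 < ∫ t in Set.Ioc (0 : ℝ) (1/2), t ^ (-(3/2 : ℝ)) * (1 - Real.exp (-2 * t * β))
    ∧ ∀ ε : ℝ, 0 < ε → ∀ᶠ N : ℕ in atTop,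
        C * (∫ t in Set.Ioc (0 : ℝ) (1/2), t ^ (-(3/2 : ℝ)) * (1 - Real.exp (-2 * t * β))) - ε
          ≤ Real.sqrt N * lam N (β / N) := by
  obtain ⟨ξ, -, hξ, -, hS⟩ := hS
  have hSmeas (n : ℕ) : Measurable (S n) := by
    rw [funext (hS n)]
    exact Finset.measurable_sum _ fun i _ => hξ i
  have hTmeas : Measurable T := by
    rw [funext hT]
    exact measurable_nat_sInf fun n =>
      (MeasurableSet.const _).inter (hSmeas n (measurableSet_singleton 0))
  have hlow' (k : ℕ) (hk : 1 ≤ k) :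
      C * (k : ℝ) ^ (-(3 / 2 : ℝ)) ≤ P.real {a | T a = 2 * k} :=
    (ENNReal.ofReal_le_iff_le_toReal (measure_ne_top _ _)).1 (hlow k hk)
  refine ⟨integrableOn_returnWeight hβ.le _, setIntegral_returnWeight_pos hβ one_half_pos,
    fun ε hε => ?_⟩
  have hsmall : ∀ᶠ N : ℕ in atTop, C * (4 * β / √N) < ε := by
    have h : Tendsto (fun N : ℕ => C * (4 * β / √N)) atTop (𝓝 0) := by
      simpa using (tendsto_const_nhds.div_atTop
        (tendsto_sqrt_atTop.comp tendsto_natCast_atTop_atTop)).const_mul C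
    exact h.eventually (gt_mem_nhds hε)
  filter_upwards [eventually_gt_atTop 0, hsmall] with N hN hNε
  have hbound := mul_sub_le_sqrt_mul_neg_log_integral hTmeas hC.le hlow' hβ.le hN
  unfold returnWeight at hbound
  rw [hlam]
  linarith
end
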